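/- Let 𝒪 ⊂ S¹ × ℝ^{2n-2} be the open set where all radial coordinates r_i > 0, and define r = (1 + Σ_{i=1}^{n-1} r_i²)^{-1/2}. Then the map 𝒪 → T^n × S^{n-1} sending (z, r₁,...,r_{n-1}, θ₁,...,θ_{n-1}) to (z, θ₁,...,θ_{n-1}, r², (r r₁)²,..., (r r_{n-1})²) is a contact diffeomorphism onto the open subset of T^n × S^{n-1} where all spherical coordinates are positive; i.e., it pulls back the canonical contact form Σ a_i dt_i of ST*T^n to a positive multiple of dz + Σ r_i² dθ_i. -/

import Mathlib

/-!
In the chart, the sphere coordinates are `a = (1, r₁², …, rₘ²) / (1 + ∑ rᵢ²)` and the torus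
coordinates `t = (z, θ)` depend linearly on the point, so `∑ aᵢ dtᵢ` pulls back to
`(dz + ∑ rᵢ² dθᵢ) / (1 + ∑ rᵢ²)`. On the positive orthant the map is inverted by
`z = t₀`, `θ = (t₁, …, tₘ)`, `rᵢ = √(aᵢ / a₀)`, using `∑ aᵢ = 1`.
-/

open Finset

namespace ContactCoordinates

variable {m : ℕ}

/-- A point `(z, (r, θ))` of `S¹ × ℝ²ᵐ` in polar coordinates, with `S¹` replaced by `ℝ`. -/
abbrev PolarCoords (m : ℕ) := ℝ × ((Fin m → ℝ) × (Fin m → ℝ))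

def toTorus : PolarCoords m →L[ℝ] Fin (m + 1) → ℝ :=
  (ContinuousLinearMap.fst ℝ ℝ _).finCons
    ((ContinuousLinearMap.snd ℝ _ _).comp (ContinuousLinearMap.snd ℝ _ _))

lemma toTorus_apply (q : PolarCoords m) : toTorus q = Fin.cons q.1 q.2.2 := rfl

noncomputable def toSphere (r : Fin m → ℝ) : Fin (m + 1) → ℝ :=
  Fin.cons ((Real.sqrt (1 + ∑ i, r i ^ 2))⁻¹ ^ 2)
    fun i => ((Real.sqrt (1 + ∑ j, r j ^ 2))⁻¹ * r i) ^ 2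

lemma one_add_sum_sq_pos (r : Fin m → ℝ) : 0 < 1 + ∑ i, r i ^ 2 := by positivity

lemma toSphere_eq (r : Fin m → ℝ) :
    toSphere r = Fin.cons (1 + ∑ i, r i ^ 2)⁻¹ fun i => (1 + ∑ j, r j ^ 2)⁻¹ * r i ^ 2 := by
  simp only [toSphere, mul_pow, inv_pow, Real.sq_sqrt (one_add_sum_sq_pos r).le]

lemma differentiable_toSphere : Differentiable ℝ (toSphere (m := m)) := by
  rw [funext toSphere_eq]
  fun_prop (disch := intro r; exact (one_add_sum_sq_pos r).ne')

lemma sum_toSphere_mul_cons (r θ : Fin m → ℝ) (z : ℝ) :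
    ∑ i, toSphere r i * (Fin.cons z θ : Fin (m + 1) → ℝ) i
      = (1 + ∑ i, r i ^ 2)⁻¹ * (z + ∑ i, r i ^ 2 * θ i) := by
  simp only [toSphere_eq, Fin.sum_univ_succ, Fin.cons_zero, Fin.cons_succ, mul_add, mul_sum,
    mul_assoc]

noncomputable def contactMap (q : PolarCoords m) : (Fin (m + 1) → ℝ) × (Fin (m + 1) → ℝ) :=
  (toTorus q, toSphere q.2.1)

lemma sum_toSphere_mul_fderiv_contactMap (p v : PolarCoords m) :
    ∑ i, toSphere p.2.1 i * (fderiv ℝ contactMap p v).1 i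
      = (1 + ∑ i, p.2.1 i ^ 2)⁻¹ * (v.1 + ∑ i, p.2.1 i ^ 2 * v.2.2 i) := by
  have hsphere : DifferentiableAt ℝ (fun q : PolarCoords m => toSphere q.2.1) p :=
    (differentiable_toSphere _).comp p (by fun_prop)
  unfold contactMap
  rw [toTorus.differentiableAt.fderiv_prodMk hsphere, ContinuousLinearMap.fderiv]
  exact sum_toSphere_mul_cons _ _ _

lemma mapsTo_toSphere :
    Set.MapsTo (toSphere (m := m)) {r | ∀ i, 0 < r i}
      {a | (∀ i, 0 < a i) ∧ ∑ i, a i = 1} := by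
  intro r hr
  refine ⟨fun i => ?_, ?_⟩
  · rw [toSphere_eq]
    induction i using Fin.cases with
    | zero => simp only [Fin.cons_zero]; positivity
    | succ i => simp only [Fin.cons_succ]; exact mul_pos (by positivity) (pow_pos (hr i) 2)
  · simp only [toSphere_eq, Fin.sum_univ_succ, Fin.cons_zero, Fin.cons_succ, ← mul_sum]
    field_simp

noncomputable def ofSphere (a : Fin (m + 1) → ℝ) : Fin m → ℝ :=
  fun i => Real.sqrt (a i.succ / a 0)

lemma mapsTo_ofSphere :
    Set.MapsTo (ofSphere (m := m)) {a | (∀ i, 0 < a i) ∧ ∑ i, a i = 1}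
      {r | ∀ i, 0 < r i} :=
  fun _ ha i => Real.sqrt_pos.mpr (div_pos (ha.1 i.succ) (ha.1 0))

lemma ofSphere_toSphere {r : Fin m → ℝ} (hr : ∀ i, 0 < r i) : ofSphere (toSphere r) = r := by
  funext i
  have hS := (one_add_sum_sq_pos r).ne'
  simp only [ofSphere, toSphere_eq, Fin.cons_zero, Fin.cons_succ]
  rw [mul_div_cancel_left₀ _ (inv_ne_zero hS), Real.sqrt_sq (hr i).le]

lemma toSphere_ofSphere {a : Fin (m + 1) → ℝ} (ha : (∀ i, 0 < a i) ∧ ∑ i, a i = 1) :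
    toSphere (ofSphere a) = a := by
  obtain ⟨hpos, hsum⟩ := ha
  have hsq (i : Fin m) : ofSphere a i ^ 2 = a i.succ / a 0 :=
    Real.sq_sqrt (div_nonneg (hpos i.succ).le (hpos 0).le)
  have hnorm : 1 + ∑ i, ofSphere a i ^ 2 = (a 0)⁻¹ := by
    rw [Fin.sum_univ_succ] at hsum
    have := (hpos 0).ne'
    simp only [hsq, ← sum_div]
    field_simp
    linarith
  rw [toSphere_eq, hnorm, inv_inv]
  refine funext (Fin.cases ?_ fun i => ?_)
  · rfl
  · simp only [Fin.cons_succ, hsq]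
    exact mul_div_cancel₀ _ (hpos 0).ne'

noncomputable def contactMapInv (y : (Fin (m + 1) → ℝ) × (Fin (m + 1) → ℝ)) : PolarCoords m :=
  (y.1 0, (ofSphere y.2, Fin.tail y.1))

lemma bijOn_contactMap :
    Set.BijOn (contactMap (m := m)) {p | ∀ i, 0 < p.2.1 i}
      {y | (∀ i, 0 < y.2 i) ∧ ∑ i, y.2 i = 1} := by
  refine Set.InvOn.bijOn (f' := contactMapInv) ⟨fun p hp => ?_, fun y hy => ?_⟩
    (fun p hp => mapsTo_toSphere hp) (fun y hy => mapsTo_ofSphere hy)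
  · simp [contactMapInv, contactMap, toTorus_apply, ofSphere_toSphere hp]
  · simp [contactMapInv, contactMap, toTorus_apply, toSphere_ofSphere hy]

end ContactCoordinates

/-- On the set 𝒪 ⊂ S¹ × ℝ^{2m} (m = n-1) where all rᵢ > 0, with
r = (1 + Σ rᵢ²)^{-1/2}, the map (z,r,θ) ↦ (z,θ₁,…,θ_m, r², (r r₁)²,…,(r r_m)²) pulls back
the canonical contact form Σ aᵢ dtᵢ of ST*Tⁿ to a positive multiple of dz + Σ rᵢ² dθᵢ, and
is a bijection onto the subset of Tⁿ × S^{n-1} where all spherical coordinates are positive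
(normalized by Σ aᵢ = 1).  Model: S¹ and Tⁿ replaced by their universal covers. -/
theorem stmt14 (m : ℕ) :
    (∃ h : ℝ × ((Fin m → ℝ) × (Fin m → ℝ)) → ℝ,
      ∀ p : ℝ × ((Fin m → ℝ) × (Fin m → ℝ)), (∀ i, 0 < p.2.1 i) →
        0 < h p ∧
        ∀ v : ℝ × ((Fin m → ℝ) × (Fin m → ℝ)),
          (fun (y : (Fin (m + 1) → ℝ) × (Fin (m + 1) → ℝ))
               (w : (Fin (m + 1) → ℝ) × (Fin (m + 1) → ℝ)) => ∑ i, y.2 i * w.1 i)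
            ((Fin.cons p.1 p.2.2,
              Fin.cons ((Real.sqrt (1 + ∑ i, p.2.1 i ^ 2))⁻¹ ^ 2)
                fun i => ((Real.sqrt (1 + ∑ j, p.2.1 j ^ 2))⁻¹ * p.2.1 i) ^ 2))
            (fderiv ℝ (fun q : ℝ × ((Fin m → ℝ) × (Fin m → ℝ)) =>
                ((Fin.cons q.1 q.2.2 : Fin (m + 1) → ℝ),
                 (Fin.cons ((Real.sqrt (1 + ∑ i, q.2.1 i ^ 2))⁻¹ ^ 2)
                   fun i => ((Real.sqrt (1 + ∑ j, q.2.1 j ^ 2))⁻¹ * q.2.1 i) ^ 2 :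
                     Fin (m + 1) → ℝ))) p v)
          = h p * (v.1 + ∑ i, p.2.1 i ^ 2 * v.2.2 i)) ∧
    Set.BijOn
      (fun q : ℝ × ((Fin m → ℝ) × (Fin m → ℝ)) =>
        ((Fin.cons q.1 q.2.2 : Fin (m + 1) → ℝ),
         (Fin.cons ((Real.sqrt (1 + ∑ i, q.2.1 i ^ 2))⁻¹ ^ 2)
           fun i => ((Real.sqrt (1 + ∑ j, q.2.1 j ^ 2))⁻¹ * q.2.1 i) ^ 2 :
             Fin (m + 1) → ℝ)))
      {p | ∀ i, 0 < p.2.1 i}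
      {y : (Fin (m + 1) → ℝ) × (Fin (m + 1) → ℝ) |
        (∀ i, 0 < y.2 i) ∧ ∑ i, y.2 i = 1} :=
  ⟨⟨fun p => (1 + ∑ i, p.2.1 i ^ 2)⁻¹, fun p _ =>
      ⟨by positivity, ContactCoordinates.sum_toSphere_mul_fderiv_contactMap p⟩⟩,
    ContactCoordinates.bijOn_contactMap⟩
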